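/- Let S, A be finite nonempty types, P_te a transition kernel, π a policy, and γ a discount factor with 0 ≤ γ < 1. Let μ, β̂, d_tr, r : S → A → ℝ, let d be a positive integer, and let Φ, Ψ : S → A → (Fin d → ℝ) be feature maps; write Ψ(s', π) := ∑_{a'} π s' a' • Ψ s' a'. Define the d × d real matrix N := ∑_{s,a,s'} μ s a * P_te s a s' * β̂ s a • vecMulVec (Φ s a) (Ψ s a − γ • Ψ(s', π)) and the vector c := ∑_{s,a} (d_tr s a * r s a) • Φ s a. If N is invertible, set ζ̂ := N⁻¹.mulVec c. Then for every α : Fin d → ℝ, with w s a := ∑_j Φ s a j * α j and q s a := ∑_j Ψ s a j * ζ̂ j, it holds that ∑_{s,a,s'} μ s a * P_te s a s' * w s a * β̂ s a * (q s a − γ * q(s', π)) − ∑_{s,a} d_tr s a * w s a * r s a = 0. -/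

import Mathlib

/-!
For linear `w = Φᵀα` and `q = Ψᵀζ̂` the loss equals `α ⬝ᵥ (N *ᵥ ζ̂) - α ⬝ᵥ c`, and
`ζ̂ = N⁻¹ c` solves the normal equation `N ζ̂ = c`.
-/

open Matrix Finset

namespace Matrix

variable {n R : Type*} [Fintype n] [CommRing R]

theorem mulVec_nonsing_inv_mulVec [DecidableEq n] {N : Matrix n n R} (hN : IsUnit N)
    (c : n → R) : N *ᵥ (N⁻¹ *ᵥ c) = c := by
  rw [mulVec_mulVec, mul_nonsing_inv N ((isUnit_iff_isUnit_det N).mp hN), one_mulVec]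

theorem dotProduct_vecMulVec_mulVec (α u v x : n → R) :
    α ⬝ᵥ (vecMulVec u v *ᵥ x) = (u ⬝ᵥ α) * (v ⬝ᵥ x) := by
  rw [vecMulVec_mulVec, op_smul_eq_smul, dotProduct_smul, smul_eq_mul, dotProduct_comm α u,
    mul_comm]

end Matrix

theorem linear_q_closed_form_general
    {S A : Type*} [Fintype S] [Fintype A]
    (Pte : S → A → S → ℝ) (π : S → A → ℝ) (γ : ℝ)
    (μ βhat dtr r : S → A → ℝ)
    (d : ℕ)
    (Φ Ψ : S → A → (Fin d → ℝ))
    (N : Matrix (Fin d) (Fin d) ℝ)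
    (hN : N = ∑ s, ∑ a, ∑ s', (μ s a * Pte s a s' * βhat s a) •
      Matrix.vecMulVec (Φ s a) (Ψ s a - γ • ∑ a', π s' a' • Ψ s' a'))
    (c : Fin d → ℝ)
    (hc : c = ∑ s, ∑ a, (dtr s a * r s a) • Φ s a)
    (hNunit : IsUnit N)
    (ζhat : Fin d → ℝ) (hζ : ζhat = N⁻¹.mulVec c) :
    ∀ α : Fin d → ℝ,
      (∑ s, ∑ a, ∑ s', μ s a * Pte s a s' * (∑ j, Φ s a j * α j) * βhat s a *
          ((∑ j, Ψ s a j * ζhat j) - γ * ∑ a', π s' a' * ∑ j, Ψ s' a' j * ζhat j))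
        - (∑ s, ∑ a, dtr s a * (∑ j, Φ s a j * α j) * r s a) = 0 := by
  intro α
  have hnormal : N *ᵥ ζhat = c := hζ ▸ mulVec_nonsing_inv_mulVec hNunit c
  have hfit : (∑ s, ∑ a, ∑ s', μ s a * Pte s a s' * (∑ j, Φ s a j * α j) * βhat s a *
        ((∑ j, Ψ s a j * ζhat j) - γ * ∑ a', π s' a' * ∑ j, Ψ s' a' j * ζhat j))
      = α ⬝ᵥ (N *ᵥ ζhat) := by
    simp only [hN, sum_mulVec, dotProduct_sum, smul_mulVec, dotProduct_smul,
      dotProduct_vecMulVec_mulVec, sub_dotProduct, smul_dotProduct, sum_dotProduct, smul_eq_mul]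
    refine sum_congr rfl fun s _ => sum_congr rfl fun a _ => sum_congr rfl fun s' _ => ?_
    simp only [dotProduct]
    ring
  have hreward : ∑ s, ∑ a, dtr s a * (∑ j, Φ s a j * α j) * r s a = α ⬝ᵥ c := by
    simp only [hc, dotProduct_sum, dotProduct_smul, smul_eq_mul]
    refine sum_congr rfl fun s _ => sum_congr rfl fun a _ => ?_
    rw [dotProduct_comm]
    simp only [dotProduct]
    ring
  rw [hfit, hreward, hnormal, sub_self]

/-- Closed-form solution of the Q-function estimator under linear
parameterization: with `q = Ψᵀ ζ̂` where `ζ̂ = N⁻¹ c`, the Q-estimation loss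
`L_q(w, β̂, q)` vanishes for every linear weight `w = Φᵀ α`. -/
theorem linear_q_closed_form
    {S A : Type*} [Fintype S] [Fintype A] [Nonempty S] [Nonempty A]
    (Pte : S → A → S → ℝ) (π : S → A → ℝ) (γ : ℝ)
    (hPte_nonneg : ∀ s a s', 0 ≤ Pte s a s')
    (hPte_sum : ∀ s a, ∑ s', Pte s a s' = 1)
    (hπ_nonneg : ∀ s a, 0 ≤ π s a) (hπ_sum : ∀ s, ∑ a, π s a = 1)
    (hγ0 : 0 ≤ γ) (hγ1 : γ < 1)
    (μ βhat dtr r : S → A → ℝ)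
    (d : ℕ) (hd : 0 < d)
    (Φ Ψ : S → A → (Fin d → ℝ))
    (N : Matrix (Fin d) (Fin d) ℝ)
    (hN : N = ∑ s, ∑ a, ∑ s', (μ s a * Pte s a s' * βhat s a) •
      Matrix.vecMulVec (Φ s a) (Ψ s a - γ • ∑ a', π s' a' • Ψ s' a'))
    (c : Fin d → ℝ)
    (hc : c = ∑ s, ∑ a, (dtr s a * r s a) • Φ s a)
    (hNunit : IsUnit N)
    (ζhat : Fin d → ℝ) (hζ : ζhat = N⁻¹.mulVec c) :
    ∀ α : Fin d → ℝ,
      (∑ s, ∑ a, ∑ s', μ s a * Pte s a s' * (∑ j, Φ s a j * α j) * βhat s a *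
          ((∑ j, Ψ s a j * ζhat j) - γ * ∑ a', π s' a' * ∑ j, Ψ s' a' j * ζhat j))
        - (∑ s, ∑ a, dtr s a * (∑ j, Φ s a j * α j) * r s a) = 0 :=
  linear_q_closed_form_general Pte π γ μ βhat dtr r d Φ Ψ N hN c hc hNunit ζhat hζ
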